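/- arXiv:1411.6669 — 3 statements merged into one kernel-verified Lean document; each statement's English description precedes it below -/
import Mathlib

section
/- For a random variable X with Gaussian distribution N(-σ²/2, σ²), the expectation of min(1, exp(X)) equals 2·Φ(-σ/2), where Φ is the standard normal CDF. -/
/-!
Split the expectation at `0`. On `x > 0` the integrand is `1`, so that part is `P(X > 0)`.
On `x ≤ 0` it is `eˣ`, and exponential tilting turns `eˣ` times the `N(μ, σ²)` density into
`e^(μ + σ²/2)` times the `N(μ + σ², σ²)` density, so that part is a Gaussian probability too.
For `μ = -σ²/2` the tilt just reflects the mean, and both parts equal `Φ(-σ/2)`.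
-/

open MeasureTheory ProbabilityTheory

/-- The standard normal cumulative distribution function. -/
noncomputable def stdNormCDF (x : ℝ) : ℝ := ((gaussianReal 0 1) (Set.Iic x)).toReal

open Real Set
open scoped NNReal

lemma tilted_mul_gaussianReal (μ t : ℝ) {v : ℝ≥0} (hv : v ≠ 0) :
    (gaussianReal μ v).tilted (t * ·) = gaussianReal (μ + v * t) v := by
  have hmgf : ∫ x, exp (t * x) ∂gaussianReal μ v = exp (μ * t + v * t ^ 2 / 2) :=
    congrFun mgf_fun_id_gaussianReal t
  rw [Measure.tilted, hmgf, gaussianReal_of_var_ne_zero _ hv, gaussianReal_of_var_ne_zero _ hv,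
    ← withDensity_mul _ (measurable_gaussianPDF _ _) (by fun_prop)]
  congr 1
  ext x
  simp only [Pi.mul_apply, gaussianPDF, ← ENNReal.ofReal_mul (gaussianPDFReal_nonneg _ _ _)]
  congr 1
  simp only [gaussianPDFReal, mul_div_assoc, ← exp_sub, mul_assoc, ← exp_add]
  have hv' : (v : ℝ) ≠ 0 := by simpa using hv
  congr 2
  field_simp
  ring

lemma setIntegral_exp_mul_gaussianReal (μ t : ℝ) {v : ℝ≥0} (hv : v ≠ 0) (s : Set ℝ) :
    ∫ x in s, exp (t * x) ∂gaussianReal μ v =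
      exp (μ * t + v * t ^ 2 / 2) * (gaussianReal (μ + v * t) v).real s := by
  rw [← tilted_mul_gaussianReal μ t hv, measureReal_def,
    tilted_mul_apply_eq_ofReal_integral_mgf (X := fun x ↦ x), mgf_fun_id_gaussianReal,
    ENNReal.toReal_ofReal (setIntegral_nonneg_of_ae ?_), integral_div,
    mul_div_cancel₀ _ (exp_ne_zero _)]
  exact .of_forall fun x ↦ by positivity

lemma gaussianReal_map_const_add_const_mul (m : ℝ) {σ : ℝ} :
    (gaussianReal 0 1).map (fun z ↦ m + σ * z) = gaussianReal m (σ ^ 2).toNNReal := by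
  calc (gaussianReal 0 1).map (fun z ↦ m + σ * z)
      = ((gaussianReal 0 1).map (σ * ·)).map (m + ·) :=
        (Measure.map_map (by fun_prop) (by fun_prop)).symm
    _ = gaussianReal m (σ ^ 2).toNNReal := by
        rw [gaussianReal_map_const_mul, gaussianReal_map_const_add]
        congr 1
        · ring
        · ext; simp [sq_nonneg]

lemma measureReal_gaussianReal_Iic {σ : ℝ} (hσ : 0 < σ) (m a : ℝ) :
    (gaussianReal m (σ ^ 2).toNNReal).real (Iic a) = stdNormCDF ((a - m) / σ) := by
  rw [stdNormCDF, measureReal_def, ← gaussianReal_map_const_add_const_mul,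
    Measure.map_apply (by fun_prop) measurableSet_Iic]
  congr 2
  ext z
  simp only [mem_preimage, mem_Iic, le_div_iff₀ hσ]
  constructor <;> intro h <;> linarith

lemma measureReal_gaussianReal_Ioi {σ : ℝ} (hσ : 0 < σ) (m a : ℝ) :
    (gaussianReal m (σ ^ 2).toNNReal).real (Ioi a) = stdNormCDF ((m - a) / σ) := by
  have hv : (σ ^ 2).toNNReal ≠ 0 := by simp [hσ.ne']
  have := nullSingletonClass_gaussianReal (μ := -m) hv
  have hneg : (gaussianReal m (σ ^ 2).toNNReal).real (Ioi a)
      = (gaussianReal (-m) (σ ^ 2).toNNReal).real (Iic (-a)) := by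
    rw [← measureReal_congr Iio_ae_eq_Iic, ← gaussianReal_map_neg,
      map_measureReal_apply (by fun_prop) measurableSet_Iio]
    congr 1
    ext x
    simp
  rw [hneg, measureReal_gaussianReal_Iic hσ]
  ring_nf

lemma integral_min_one_exp_gaussianReal (m : ℝ) {σ : ℝ} (hσ : 0 < σ) :
    ∫ x, min 1 (exp x) ∂gaussianReal m (σ ^ 2).toNNReal =
      exp (m + σ ^ 2 / 2) * stdNormCDF ((-m - σ ^ 2) / σ) + stdNormCDF (m / σ) := by
  have hv : (σ ^ 2).toNNReal ≠ 0 := by simp [hσ.ne']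
  have hint : Integrable (fun x ↦ min 1 (exp x)) (gaussianReal m (σ ^ 2).toNNReal) :=
    (integrable_const 1).mono' (by fun_prop) <| .of_forall fun x ↦ by
      rw [norm_eq_abs, abs_of_nonneg (by positivity)]
      exact min_le_left _ _
  have hle : ∫ x in Iic 0, min 1 (exp x) ∂gaussianReal m (σ ^ 2).toNNReal
      = ∫ x in Iic 0, exp (1 * x) ∂gaussianReal m (σ ^ 2).toNNReal :=
    setIntegral_congr_fun measurableSet_Iic fun x hx ↦ by simpa using hx
  have hgt : ∫ x in Ioi 0, min 1 (exp x) ∂gaussianReal m (σ ^ 2).toNNReal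
      = (gaussianReal m (σ ^ 2).toNNReal).real (Ioi 0) := by
    rw [setIntegral_congr_fun measurableSet_Ioi (g := fun _ ↦ 1)
      fun x hx ↦ min_eq_left (one_le_exp (le_of_lt hx)), setIntegral_const, smul_eq_mul, mul_one]
  rw [← integral_add_compl (measurableSet_Iic (a := 0)) hint, compl_Iic, hle, hgt,
    setIntegral_exp_mul_gaussianReal _ _ hv, measureReal_gaussianReal_Iic hσ,
    measureReal_gaussianReal_Ioi hσ, Real.coe_toNNReal _ (sq_nonneg σ)]
  ring_nf

/-- For `X ~ N(-σ²/2, σ²)`, `E[min(1, exp X)] = 2 Φ(-σ/2)`. -/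
theorem expectation_metropolis_accept (σ : ℝ) (hσ : 0 < σ) :
    ∫ x, min 1 (Real.exp x) ∂(gaussianReal (-σ ^ 2 / 2) ((σ ^ 2).toNNReal)) =
      2 * stdNormCDF (-σ / 2) := by
  have hσ' : σ ≠ 0 := hσ.ne'
  have hmean : (-σ ^ 2 / 2) / σ = -σ / 2 := by field_simp
  have htilt : (-(-σ ^ 2 / 2) - σ ^ 2) / σ = -σ / 2 := by field_simp; ring
  have hnorm : -σ ^ 2 / 2 + σ ^ 2 / 2 = 0 := by ring
  rw [integral_min_one_exp_gaussianReal _ hσ, hmean, htilt, hnorm, exp_zero]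
  ring
end

section
/- For the harmonic oscillator with q,p independent standard normals, G(q,p)=(2q²-p²)/24, H=(q²+p²)/2, and rotation flow Φ_τ, the combination 2·E[G²/H] - E[G·(G∘Φ_τ)] equals (1 - cos 2τ)/64. -/
/-!
In polar coordinates the product of two standard Gaussians is `(2π)⁻¹ r e^{-r²/2} dr dθ`,
`H = r²/2`, `G = r² (1 + 3 cos 2θ) / 48`, and the flow `Φ_τ` shifts the angle by `-τ`.
Both expectations therefore split into a radial moment `∫ r^{2k+1} e^{-r²/2} dr = 2^k k!` and the
angular integral `∫_{-π}^{π} (1 + 3 cos 2θ)(1 + 3 cos (2θ - 2τ)) dθ = 2π + 9π cos 2τ`, which give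
`E[G²/H] = 11/1152` and `E[G (G ∘ Φ_τ)] = (2 + 9 cos 2τ)/576`.
-/

open MeasureTheory ProbabilityTheory Real Set

lemma integral_pow_mul_exp_neg_sq_div_two (k : ℕ) :
    ∫ r in Ioi (0 : ℝ), r ^ (2 * k + 1) * exp (-r ^ 2 / 2) = 2 ^ k * k.factorial := by
  have h := integral_rpow_mul_exp_neg_mul_rpow (p := 2) (q := 2 * k + 1) (b := 1 / 2)
    two_pos (by linarith [(k.cast_nonneg : (0 : ℝ) ≤ k)]) one_half_pos
  have hexp : (-(2 * k + 1 + 1) / 2 : ℝ) = -(k + 1 : ℕ) := by push_cast; ring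
  rw [hexp, rpow_neg one_half_pos.le, rpow_natCast, show (2 * k + 1 + 1 : ℝ) / 2 = k + 1 by ring,
    Gamma_nat_eq_factorial] at h
  convert h using 1
  · refine setIntegral_congr_fun measurableSet_Ioi fun r _ => ?_
    norm_cast
    ring_nf
  · field_simp
    rw [← pow_succ, ← mul_pow]; norm_num

lemma integral_mul_cos_two_mul_add (a b c d α β : ℝ) :
    ∫ θ in -π..π, (a + b * cos (2 * θ + α)) * (c + d * cos (2 * θ + β)) =
      2 * π * (a * c) + π * (b * d) * cos (α - β) := by
  have hsin (n γ θ : ℝ) : HasDerivAt (fun θ => sin (n * θ + γ)) (cos (n * θ + γ) * n) θ := by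
    simpa using (((hasDerivAt_id θ).const_mul n).add_const γ).sin
  have hderiv (θ : ℝ) : HasDerivAt (fun θ => θ * (a * c + b * d / 2 * cos (α - β))
      + b * c / 2 * sin (2 * θ + α) + a * d / 2 * sin (2 * θ + β)
      + b * d / 8 * sin (4 * θ + (α + β)))
      ((a + b * cos (2 * θ + α)) * (c + d * cos (2 * θ + β))) θ := by
    refine ((((hasDerivAt_mul_const _).fun_add ((hsin 2 α θ).const_mul _)).fun_add
      ((hsin 2 β θ).const_mul _)).fun_add ((hsin 4 (α + β) θ).const_mul _)).congr_deriv ?_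
    have h4 : cos (4 * θ + (α + β)) = cos (2 * θ + α) * cos (2 * θ + β)
        - sin (2 * θ + α) * sin (2 * θ + β) := by
      rw [← cos_add]; ring_nf
    have hαβ : cos (α - β) = cos (2 * θ + α) * cos (2 * θ + β)
        + sin (2 * θ + α) * sin (2 * θ + β) := by
      rw [← cos_sub]; ring_nf
    rw [h4, hαβ]
    ring
  rw [intervalIntegral.integral_eq_sub_of_hasDerivAt (fun θ _ => hderiv θ)
    (Continuous.intervalIntegrable (by fun_prop) _ _)]
  have hper (n : ℕ) (γ : ℝ) : sin (n * π + γ) = sin (n * -π + γ) := by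
    rw [← sin_add_nat_mul_two_pi (n * -π + γ) n]; congr 1; ring
  have hper₂ := hper 2
  have hper₄ := hper 4
  simp only [Nat.cast_ofNat] at hper₂ hper₄
  rw [hper₂, hper₂, hper₄]
  ring

section

variable {E : Type*} [NormedAddCommGroup E] [NormedSpace ℝ E]

lemma integral_gaussianReal_prod_gaussianReal (f : ℝ × ℝ → E) :
    ∫ z, f z ∂(gaussianReal 0 1).prod (gaussianReal 0 1) =
      ∫ z : ℝ × ℝ, ((2 * π)⁻¹ * exp (-(z.1 ^ 2 + z.2 ^ 2) / 2)) • f z := by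
  rw [gaussianReal_of_var_ne_zero 0 one_ne_zero, prod_withDensity (measurable_gaussianPDF 0 1)
    (measurable_gaussianPDF 0 1), ← Measure.volume_eq_prod,
    integral_withDensity_eq_integral_toReal_smul (by fun_prop)
      (ae_of_all _ fun _ => ENNReal.mul_lt_top gaussianPDF_lt_top gaussianPDF_lt_top)]
  congr with z
  congr 1
  simp only [ENNReal.toReal_mul, toReal_gaussianPDF, gaussianPDFReal, NNReal.coe_one, mul_one,
    sub_zero]
  rw [mul_mul_mul_comm, ← mul_inv, mul_self_sqrt (by positivity), ← exp_add]
  ring_nf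

lemma integral_gaussianReal_prod_gaussianReal_eq_polar (f : ℝ × ℝ → E) :
    ∫ z, f z ∂(gaussianReal 0 1).prod (gaussianReal 0 1) =
      (2 * π)⁻¹ •
        ∫ p in Ioi 0 ×ˢ Ioo (-π) π, (p.1 * exp (-p.1 ^ 2 / 2)) • f (polarCoord.symm p) := by
  rw [integral_gaussianReal_prod_gaussianReal, ← integral_comp_polarCoord_symm, polarCoord_target,
    ← integral_smul]
  refine setIntegral_congr_fun (measurableSet_Ioi.prod measurableSet_Ioo) fun p _ => ?_
  have hr : (p.1 * cos p.2) ^ 2 + (p.1 * sin p.2) ^ 2 = p.1 ^ 2 := by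
    linear_combination p.1 ^ 2 * sin_sq_add_cos_sq p.2
  simp only [polarCoord_symm_apply, hr, smul_smul]
  ring_nf

end

lemma integral_gaussianReal_prod_gaussianReal_of_polar_eq (f : ℝ × ℝ → ℝ) (k : ℕ) (g : ℝ → ℝ)
    (hf : ∀ r, 0 < r → ∀ θ, f (r * cos θ, r * sin θ) = r ^ (2 * k) * g θ) :
    ∫ z, f z ∂(gaussianReal 0 1).prod (gaussianReal 0 1) =
      2 ^ k * k.factorial / (2 * π) * ∫ θ in -π..π, g θ := by
  rw [integral_gaussianReal_prod_gaussianReal_eq_polar,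
    setIntegral_congr_fun (measurableSet_Ioi.prod measurableSet_Ioo)
      (g := fun p : ℝ × ℝ => (p.1 ^ (2 * k + 1) * exp (-p.1 ^ 2 / 2)) * g p.2) fun p hp => ?_,
    Measure.volume_eq_prod,
    setIntegral_prod_mul (fun r => r ^ (2 * k + 1) * exp (-r ^ 2 / 2)) g,
    integral_pow_mul_exp_neg_sq_div_two,
    intervalIntegral.integral_of_le (by linarith [pi_pos]), integral_Ioc_eq_integral_Ioo]
  · rw [smul_eq_mul]; ring
  · simp only [polarCoord_symm_apply, smul_eq_mul, hf p.1 hp.1]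
    ring

/-- For the harmonic oscillator with `q, p` independent standard normals,
`2 E[G²/H] - E[G · (G ∘ Φ_τ)] = (1 - cos 2τ)/64`. -/
theorem harmonic_oscillator_average_error_coefficient (τ : ℝ) :
    2 * (∫ z : ℝ × ℝ, ((2 * z.1 ^ 2 - z.2 ^ 2) / 24) ^ 2 / ((z.1 ^ 2 + z.2 ^ 2) / 2)
          ∂((gaussianReal 0 1).prod (gaussianReal 0 1)))
      - (∫ z : ℝ × ℝ,
          ((2 * z.1 ^ 2 - z.2 ^ 2) / 24) *
            ((2 * (Real.cos τ * z.1 + Real.sin τ * z.2) ^ 2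
              - (-Real.sin τ * z.1 + Real.cos τ * z.2) ^ 2) / 24)
          ∂((gaussianReal 0 1).prod (gaussianReal 0 1))) =
      (1 - Real.cos (2 * τ)) / 64 := by
  have hG (r φ : ℝ) :
      (2 * (r * cos φ) ^ 2 - (r * sin φ) ^ 2) / 24 = r ^ 2 * (1 + 3 * cos (2 * φ)) / 48 := by
    rw [cos_two_mul]
    linear_combination -r ^ 2 / 24 * sin_sq_add_cos_sq φ
  have hH (r φ : ℝ) : ((r * cos φ) ^ 2 + (r * sin φ) ^ 2) / 2 = r ^ 2 / 2 := by
    linear_combination r ^ 2 / 2 * sin_sq_add_cos_sq φ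
  have hrot₁ (r θ : ℝ) : cos τ * (r * cos θ) + sin τ * (r * sin θ) = r * cos (θ - τ) := by
    rw [cos_sub]; ring
  have hrot₂ (r θ : ℝ) : -sin τ * (r * cos θ) + cos τ * (r * sin θ) = r * sin (θ - τ) := by
    rw [sin_sub]; ring
  rw [integral_gaussianReal_prod_gaussianReal_of_polar_eq _ 1
      (fun θ => (1 + 3 * cos (2 * θ + 0)) * (1 + 3 * cos (2 * θ + 0)) / 1152) fun r _ θ => ?_,
    integral_gaussianReal_prod_gaussianReal_of_polar_eq _ 2
      (fun θ => (1 + 3 * cos (2 * θ + 0)) * (1 + 3 * cos (2 * θ + -(2 * τ))) / 2304)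
      fun r _ θ => ?_,
    intervalIntegral.integral_div, intervalIntegral.integral_div, integral_mul_cos_two_mul_add,
    integral_mul_cos_two_mul_add]
  · simp only [sub_zero, zero_sub, neg_neg, cos_zero, Nat.factorial]
    field_simp
    ring
  · dsimp only
    rw [hrot₁, hrot₂, hG, hG, add_zero, show 2 * (θ - τ) = 2 * θ + -(2 * τ) by ring]
    ring
  · dsimp only
    rw [hG, hH, add_zero]
    field_simp
    ring
end

section
/- If the cumulants of a family of random variables satisfy the recursion κ_n = μ_n - ∑_{m=1}^{n-1} C(n-1, m-1) κ_m μ_{n-m}, and the moments satisfy μ_n = O(ε^{k(n+1)}) for n odd and μ_n = O(ε^{kn}) for n even as ε → 0, then the cumulants satisfy the same scaling: κ_n = O(ε^{k(n+1)}) for n odd and κ_n = O(ε^{kn}) for n even. -/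
/-!
Give the `n`-th moment and cumulant the weight `w n = k (n + n % 2)`, i.e. `k` times `n` rounded up
to an even number. This weight is subadditive, so
every product `κ_m μ_{n-m}` in the moment-cumulant recursion is
`O(ε^{w m + w (n-m)}) ⊆ O(ε^{w n})`, and strong induction on `n` carries the bound from the moments
to the cumulants.
-/

open Filter Asymptotics Finset Topology

section

variable {𝕜 : Type*} [NormedField 𝕜]

lemma isBigO_pow_pow_of_le {m n : ℕ} (h : m ≤ n) :
    (fun x : 𝕜 => x ^ n) =O[𝓝 0] fun x => x ^ m := by
  rcases h.eq_or_lt with rfl | h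
  · exact isBigO_refl _ _
  · exact (isLittleO_pow_pow h).isBigO

theorem cumulant_isBigO_pow_of_subadditive {l : Filter 𝕜} (hl : l ≤ 𝓝 0) (w : ℕ → ℕ)
    (hw : ∀ a b, w (a + b) ≤ w a + w b) (μ κ : ℕ → 𝕜 → 𝕜)
    (hrec : ∀ n, 1 ≤ n → ∀ ε, κ n ε =
      μ n ε - ∑ m ∈ Icc 1 (n - 1), ((n - 1).choose (m - 1) : 𝕜) * κ m ε * μ (n - m) ε)
    (hμ : ∀ n, 1 ≤ n → (fun ε => μ n ε) =O[l] fun ε => ε ^ w n) :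
    ∀ n, 1 ≤ n → (fun ε => κ n ε) =O[l] fun ε => ε ^ w n := by
  intro n
  induction n using Nat.strong_induction_on with
  | _ n ih =>
  intro hn
  have hterm : ∀ m ∈ Icc 1 (n - 1), (fun ε => ((n - 1).choose (m - 1) : 𝕜) * κ m ε * μ (n - m) ε)
      =O[l] fun ε => ε ^ w n := by
    intro m hm
    obtain ⟨hm1, hmn⟩ := mem_Icc.mp hm
    have hsplit : w n ≤ w m + w (n - m) := by
      simpa only [Nat.add_sub_cancel' (by omega : m ≤ n)] using hw m (n - m)
    calc (fun ε => ((n - 1).choose (m - 1) : 𝕜) * κ m ε * μ (n - m) ε)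
        =O[l] fun ε => ε ^ w m * ε ^ w (n - m) := by
          simpa only [mul_assoc] using
            ((ih m (by omega) hm1).mul (hμ (n - m) (by omega))).const_mul_left _
      _ = fun ε => ε ^ (w m + w (n - m)) := by simp only [pow_add]
      _ =O[l] fun ε => ε ^ w n := (isBigO_pow_pow_of_le hsplit).mono hl
  rw [show (fun ε => κ n ε) = _ from funext (hrec n hn)]
  exact (hμ n hn).sub (IsBigO.fun_sum hterm)

end

theorem cumulant_scaling_from_moment_scaling_general (k : ℕ)
    (μ κ : ℕ → ℝ → ℝ)
    (hrec : ∀ n : ℕ, 1 ≤ n → ∀ ε : ℝ, κ n ε =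
      μ n ε - ∑ m ∈ Finset.Icc 1 (n - 1), ((n - 1).choose (m - 1) : ℝ) * κ m ε * μ (n - m) ε)
    (hμodd : ∀ n : ℕ, 1 ≤ n → Odd n →
      (fun ε => μ n ε) =O[nhdsWithin 0 (Set.Ioi 0)] fun ε : ℝ => ε ^ (k * (n + 1)))
    (hμeven : ∀ n : ℕ, 1 ≤ n → Even n →
      (fun ε => μ n ε) =O[nhdsWithin 0 (Set.Ioi 0)] fun ε : ℝ => ε ^ (k * n)) :
    (∀ n : ℕ, 1 ≤ n → Odd n →
      (fun ε => κ n ε) =O[nhdsWithin 0 (Set.Ioi 0)] fun ε : ℝ => ε ^ (k * (n + 1))) ∧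
    (∀ n : ℕ, 1 ≤ n → Even n →
      (fun ε => κ n ε) =O[nhdsWithin 0 (Set.Ioi 0)] fun ε : ℝ => ε ^ (k * n)) := by
  have hw : ∀ a b, k * (a + b + (a + b) % 2) ≤ k * (a + a % 2) + k * (b + b % 2) := fun a b => by
    rw [← mul_add]
    exact Nat.mul_le_mul_left k (by omega)
  have hμ : ∀ n, 1 ≤ n → (fun ε => μ n ε) =O[nhdsWithin 0 (Set.Ioi 0)]
      fun ε : ℝ => ε ^ (k * (n + n % 2)) := by
    intro n hn
    rcases Nat.even_or_odd n with he | ho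
    · simpa [Nat.even_iff.mp he] using hμeven n hn he
    · simpa [Nat.odd_iff.mp ho] using hμodd n hn ho
  have hκ := cumulant_isBigO_pow_of_subadditive nhdsWithin_le_nhds _ hw μ κ hrec hμ
  refine ⟨fun n hn ho => ?_, fun n hn he => ?_⟩
  · simpa [Nat.odd_iff.mp ho] using hκ n hn
  · simpa [Nat.even_iff.mp he] using hκ n hn

/-- If the cumulants satisfy the moment-cumulant recursion
`κ_n = μ_n - ∑_{m=1}^{n-1} C(n-1, m-1) κ_m μ_{n-m}` and the moments satisfy
`μ_n = O(ε^{k(n+1)})` for odd `n` and `μ_n = O(ε^{kn})` for even `n`,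
then the cumulants satisfy the same scaling. -/
theorem cumulant_scaling_from_moment_scaling (k : ℕ) (hk : 1 ≤ k)
    (μ κ : ℕ → ℝ → ℝ)
    (hrec : ∀ n : ℕ, 1 ≤ n → ∀ ε : ℝ, κ n ε =
      μ n ε - ∑ m ∈ Finset.Icc 1 (n - 1), ((n - 1).choose (m - 1) : ℝ) * κ m ε * μ (n - m) ε)
    (hμodd : ∀ n : ℕ, 1 ≤ n → Odd n →
      (fun ε => μ n ε) =O[nhdsWithin 0 (Set.Ioi 0)] fun ε : ℝ => ε ^ (k * (n + 1)))
    (hμeven : ∀ n : ℕ, 1 ≤ n → Even n →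
      (fun ε => μ n ε) =O[nhdsWithin 0 (Set.Ioi 0)] fun ε : ℝ => ε ^ (k * n)) :
    (∀ n : ℕ, 1 ≤ n → Odd n →
      (fun ε => κ n ε) =O[nhdsWithin 0 (Set.Ioi 0)] fun ε : ℝ => ε ^ (k * (n + 1))) ∧
    (∀ n : ℕ, 1 ≤ n → Even n →
      (fun ε => κ n ε) =O[nhdsWithin 0 (Set.Ioi 0)] fun ε : ℝ => ε ^ (k * n)) :=
  cumulant_scaling_from_moment_scaling_general k μ κ hrec hμodd hμeven
end
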